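/- In $U$ the identity $[\,E_{1112}E_{112}-r^{3}E_{112}E_{1112},\ f_2\,]=0$ holds. -/
import Mathlib


noncomputable section

set_option maxHeartbeats 1000000

open MvPolynomial

/-- The field `K = ℚ(r,s)` of rational functions in two indeterminates over `ℚ`. -/
abbrev K : Type := FractionRing (MvPolynomial (Fin 2) ℚ)

/-- The first indeterminate `r`. -/
def r : K := algebraMap (MvPolynomial (Fin 2) ℚ) K (X 0)

/-- The second indeterminate `s`. -/
def s : K := algebraMap (MvPolynomial (Fin 2) ℚ) K (X 1)

/-- `Δ = r² + rs + s²`. -/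
def Δ : K := r ^ 2 + r * s + s ^ 2

/-- Generators of the two-parameter quantum group `U_{r,s}(G₂)` inside an associative unital
`K`-algebra `U`, together with the defining relations (G1)–(G6). -/
structure G2 (U : Type*) [Ring U] [Algebra K U] where
  e1 : U
  e2 : U
  f1 : U
  f2 : U
  ω1 : Uˣ
  ω2 : Uˣ
  ω1' : Uˣ
  ω2' : Uˣ
  /- (G1) : the `ω`'s pairwise commute. -/
  G1_a : ω1 * ω2 = ω2 * ω1
  G1_b : ω1 * ω1' = ω1' * ω1
  G1_c : ω1 * ω2' = ω2' * ω1
  G1_d : ω2 * ω1' = ω1' * ω2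
  G1_e : ω2 * ω2' = ω2' * ω2
  G1_f : ω1' * ω2' = ω2' * ω1'
  /- (G2) -/
  G2_a : (ω1 : U) * e1 * ((ω1⁻¹ : Uˣ) : U) = (r * s⁻¹) • e1
  G2_b : (ω1 : U) * f1 * ((ω1⁻¹ : Uˣ) : U) = (r⁻¹ * s) • f1
  G2_c : (ω1 : U) * e2 * ((ω1⁻¹ : Uˣ) : U) = (s ^ 3) • e2
  G2_d : (ω1 : U) * f2 * ((ω1⁻¹ : Uˣ) : U) = (s ^ 3)⁻¹ • f2
  G2_e : (ω2 : U) * e1 * ((ω2⁻¹ : Uˣ) : U) = (r ^ 3)⁻¹ • e1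
  G2_f : (ω2 : U) * f1 * ((ω2⁻¹ : Uˣ) : U) = (r ^ 3) • f1
  G2_g : (ω2 : U) * e2 * ((ω2⁻¹ : Uˣ) : U) = (r ^ 3 * (s ^ 3)⁻¹) • e2
  G2_h : (ω2 : U) * f2 * ((ω2⁻¹ : Uˣ) : U) = ((r ^ 3)⁻¹ * s ^ 3) • f2
  /- (G3) -/
  G3_a : (ω1' : U) * e1 * ((ω1'⁻¹ : Uˣ) : U) = (r⁻¹ * s) • e1
  G3_b : (ω1' : U) * f1 * ((ω1'⁻¹ : Uˣ) : U) = (r * s⁻¹) • f1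
  G3_c : (ω1' : U) * e2 * ((ω1'⁻¹ : Uˣ) : U) = (r ^ 3) • e2
  G3_d : (ω1' : U) * f2 * ((ω1'⁻¹ : Uˣ) : U) = (r ^ 3)⁻¹ • f2
  G3_e : (ω2' : U) * e1 * ((ω2'⁻¹ : Uˣ) : U) = (s ^ 3)⁻¹ • e1
  G3_f : (ω2' : U) * f1 * ((ω2'⁻¹ : Uˣ) : U) = (s ^ 3) • f1
  G3_g : (ω2' : U) * e2 * ((ω2'⁻¹ : Uˣ) : U) = ((r ^ 3)⁻¹ * s ^ 3) • e2
  G3_h : (ω2' : U) * f2 * ((ω2'⁻¹ : Uˣ) : U) = (r ^ 3 * (s ^ 3)⁻¹) • f2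
  /- (G4) -/
  G4_a : e1 * f1 - f1 * e1 = (r - s)⁻¹ • ((ω1 : U) - (ω1' : U))
  G4_b : e2 * f2 - f2 * e2 = (r ^ 3 - s ^ 3)⁻¹ • ((ω2 : U) - (ω2' : U))
  G4_c : e1 * f2 = f2 * e1
  G4_d : e2 * f1 = f1 * e2
  /- (G5) -/
  G5_a : e2 ^ 2 * e1 - ((r ^ 3)⁻¹ + (s ^ 3)⁻¹) • (e2 * e1 * e2)
      + ((r * s) ^ 3)⁻¹ • (e1 * e2 ^ 2) = 0
  G5_b : e1 ^ 4 * e2 - ((r + s) * (r ^ 2 + s ^ 2)) • (e1 ^ 3 * e2 * e1)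
      + (r * s * (r ^ 2 + s ^ 2) * (r ^ 2 + r * s + s ^ 2)) • (e1 ^ 2 * e2 * e1 ^ 2)
      - ((r * s) ^ 3 * (r + s) * (r ^ 2 + s ^ 2)) • (e1 * e2 * e1 ^ 3)
      + ((r * s) ^ 6) • (e2 * e1 ^ 4) = 0
  /- (G6) -/
  G6_a : f1 * f2 ^ 2 - ((r ^ 3)⁻¹ + (s ^ 3)⁻¹) • (f2 * f1 * f2)
      + ((r * s) ^ 3)⁻¹ • (f2 ^ 2 * f1) = 0
  G6_b : f2 * f1 ^ 4 - ((r + s) * (r ^ 2 + s ^ 2)) • (f1 * f2 * f1 ^ 3)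
      + (r * s * (r ^ 2 + s ^ 2) * (r ^ 2 + r * s + s ^ 2)) • (f1 ^ 2 * f2 * f1 ^ 2)
      - ((r * s) ^ 3 * (r + s) * (r ^ 2 + s ^ 2)) • (f1 ^ 3 * f2 * f1)
      + ((r * s) ^ 6) • (f1 ^ 4 * f2) = 0

namespace G2

variable {U : Type*} [Ring U] [Algebra K U]

/-- The quantum root vector `E₁₂ = e₁e₂ - s³e₂e₁`. -/
def E12 (d : G2 U) : U := d.e1 * d.e2 - (s ^ 3) • (d.e2 * d.e1)

/-- The quantum root vector `F₁₂ = f₂f₁ - r³f₁f₂`. -/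
def F12 (d : G2 U) : U := d.f2 * d.f1 - (r ^ 3) • (d.f1 * d.f2)

/-- The quantum root vector `E₁₁₂ = e₁E₁₂ - rs²E₁₂e₁`. -/
def E112 (d : G2 U) : U := d.e1 * d.E12 - (r * s ^ 2) • (d.E12 * d.e1)

/-- The quantum root vector `F₁₁₂ = F₁₂f₁ - r²sf₁F₁₂`. -/
def F112 (d : G2 U) : U := d.F12 * d.f1 - (r ^ 2 * s) • (d.f1 * d.F12)

/-- The quantum root vector `E₁₁₁₂ = e₁E₁₁₂ - r²sE₁₁₂e₁`. -/
def E1112 (d : G2 U) : U := d.e1 * d.E112 - (r ^ 2 * s) • (d.E112 * d.e1)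

/-- The quantum root vector `F₁₁₁₂ = F₁₁₂f₁ - rs²f₁F₁₁₂`. -/
def F1112 (d : G2 U) : U := d.F112 * d.f1 - (r * s ^ 2) • (d.f1 * d.F112)

/-- The quantum root vector `E₂₁ = e₂e₁ - r⁻³e₁e₂`. -/
def E21 (d : G2 U) : U := d.e2 * d.e1 - (r ^ 3)⁻¹ • (d.e1 * d.e2)

end G2


section Gen

variable {F : Type*} [Field F] {U : Type*} [Ring U] [Algebra F U]

/-- generic `E₁₂`. -/
def gE12 (s : F) (e1 e2 : U) : U := e1 * e2 - (s ^ 3) • (e2 * e1)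

/-- generic `E₁₁₂`. -/
def gE112 (r s : F) (e1 e2 : U) : U :=
  e1 * gE12 s e1 e2 - (r * s ^ 2) • (gE12 s e1 e2 * e1)

/-- generic `E₁₁₁₂`. -/
def gE1112 (r s : F) (e1 e2 : U) : U :=
  e1 * gE112 r s e1 e2 - (r ^ 2 * s) • (gE112 r s e1 e2 * e1)

variable {r s : F} {e1 e2 f2 w w' : U}

lemma wE12 (hr : r ≠ 0) (hs : s ≠ 0)
    (hw1 : e1 * w = (r ^ 3) • (w * e1))
    (hw2 : e2 * w = ((r ^ 3)⁻¹ * s ^ 3) • (w * e2)) :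
    gE12 s e1 e2 * w = (s ^ 3) • (w * gE12 s e1 e2) := by
  have hw1' : ∀ x : U, e1 * (w * x) = (r ^ 3) • (w * (e1 * x)) := fun x => by
    rw [← mul_assoc, hw1, smul_mul_assoc, mul_assoc]
  have hw2' : ∀ x : U, e2 * (w * x) = ((r ^ 3)⁻¹ * s ^ 3) • (w * (e2 * x)) := fun x => by
    rw [← mul_assoc, hw2, smul_mul_assoc, mul_assoc]
  simp only [gE12, sub_mul, mul_sub, smul_mul_assoc, mul_smul_comm, mul_assoc,
    hw1, hw2, hw1', hw2', smul_sub, smul_smul]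
  match_scalars <;> field_simp <;> ring

lemma wE112 (hr : r ≠ 0) (hs : s ≠ 0)
    (hw1 : e1 * w = (r ^ 3) • (w * e1))
    (hw2 : e2 * w = ((r ^ 3)⁻¹ * s ^ 3) • (w * e2)) :
    gE112 r s e1 e2 * w = (r ^ 3 * s ^ 3) • (w * gE112 r s e1 e2) := by
  have h12 := wE12 hr hs hw1 hw2
  have h12' : ∀ x : U, gE12 s e1 e2 * (w * x) = (s ^ 3) • (w * (gE12 s e1 e2 * x)) := fun x => by
    rw [← mul_assoc, h12, smul_mul_assoc, mul_assoc]
  have hw1' : ∀ x : U, e1 * (w * x) = (r ^ 3) • (w * (e1 * x)) := fun x => by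
    rw [← mul_assoc, hw1, smul_mul_assoc, mul_assoc]
  simp only [gE112, sub_mul, mul_sub, smul_mul_assoc, mul_smul_comm, mul_assoc,
    h12, h12', hw1, hw1', smul_sub, smul_smul]
  match_scalars <;> ring

lemma wE1112 (hr : r ≠ 0) (hs : s ≠ 0)
    (hw1 : e1 * w = (r ^ 3) • (w * e1))
    (hw2 : e2 * w = ((r ^ 3)⁻¹ * s ^ 3) • (w * e2)) :
    gE1112 r s e1 e2 * w = (r ^ 6 * s ^ 3) • (w * gE1112 r s e1 e2) := by
  have h112 := wE112 hr hs hw1 hw2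
  have h112' : ∀ x : U, gE112 r s e1 e2 * (w * x)
      = (r ^ 3 * s ^ 3) • (w * (gE112 r s e1 e2 * x)) := fun x => by
    rw [← mul_assoc, h112, smul_mul_assoc, mul_assoc]
  have hw1' : ∀ x : U, e1 * (w * x) = (r ^ 3) • (w * (e1 * x)) := fun x => by
    rw [← mul_assoc, hw1, smul_mul_assoc, mul_assoc]
  simp only [gE1112, sub_mul, mul_sub, smul_mul_assoc, mul_smul_comm, mul_assoc,
    h112, h112', hw1, hw1', smul_sub, smul_smul]
  match_scalars <;> ring

lemma fE12 (hd : r ^ 3 - s ^ 3 ≠ 0)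
    (hef : e1 * f2 = f2 * e1)
    (h2f : e2 * f2 = f2 * e2 + (r ^ 3 - s ^ 3)⁻¹ • (w - w'))
    (hw1 : e1 * w = (r ^ 3) • (w * e1))
    (hw1' : e1 * w' = (s ^ 3) • (w' * e1)) :
    gE12 s e1 e2 * f2 = f2 * gE12 s e1 e2 + w * e1 := by
  have hef' : ∀ x : U, e1 * (f2 * x) = f2 * (e1 * x) := fun x => by
    rw [← mul_assoc, hef, mul_assoc]
  have h2f' : ∀ x : U, e2 * (f2 * x) = f2 * (e2 * x)
      + (r ^ 3 - s ^ 3)⁻¹ • (w * x) - (r ^ 3 - s ^ 3)⁻¹ • (w' * x) := fun x => by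
    rw [← mul_assoc, h2f, add_mul, smul_mul_assoc, sub_mul, mul_assoc, smul_sub]
    abel
  simp only [gE12, sub_mul, mul_sub, smul_mul_assoc, mul_smul_comm, mul_assoc,
    hef, hef', h2f, h2f', hw1, hw1', smul_sub, smul_add, smul_smul, mul_add, mul_sub]
  match_scalars <;> field_simp <;> ring

lemma fE112 (hd : r ^ 3 - s ^ 3 ≠ 0)
    (hef : e1 * f2 = f2 * e1)
    (h2f : e2 * f2 = f2 * e2 + (r ^ 3 - s ^ 3)⁻¹ • (w - w'))
    (hw1 : e1 * w = (r ^ 3) • (w * e1))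
    (hw1' : e1 * w' = (s ^ 3) • (w' * e1)) :
    gE112 r s e1 e2 * f2 = f2 * gE112 r s e1 e2
      + (r ^ 3 - r * s ^ 2) • (w * (e1 * e1)) := by
  have h12 := fE12 hd hef h2f hw1 hw1'
  have h12' : ∀ x : U, gE12 s e1 e2 * (f2 * x)
      = f2 * (gE12 s e1 e2 * x) + w * (e1 * x) := fun x => by
    rw [← mul_assoc, h12, add_mul, mul_assoc, mul_assoc]
  have hef' : ∀ x : U, e1 * (f2 * x) = f2 * (e1 * x) := fun x => by
    rw [← mul_assoc, hef, mul_assoc]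
  have hww : ∀ x : U, e1 * (w * x) = (r ^ 3) • (w * (e1 * x)) := fun x => by
    rw [← mul_assoc, hw1, smul_mul_assoc, mul_assoc]
  simp only [gE112, sub_mul, mul_sub, smul_mul_assoc, mul_smul_comm, mul_assoc,
    h12, h12', hef, hef', hw1, hww, smul_sub, smul_add, smul_smul, mul_add, mul_sub]
  match_scalars <;> ring

lemma fE1112 (hd : r ^ 3 - s ^ 3 ≠ 0)
    (hef : e1 * f2 = f2 * e1)
    (h2f : e2 * f2 = f2 * e2 + (r ^ 3 - s ^ 3)⁻¹ • (w - w'))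
    (hw1 : e1 * w = (r ^ 3) • (w * e1))
    (hw1' : e1 * w' = (s ^ 3) • (w' * e1)) :
    gE1112 r s e1 e2 * f2 = f2 * gE1112 r s e1 e2
      + ((r ^ 3 - r * s ^ 2) * (r ^ 3 - r ^ 2 * s)) • (w * (e1 * (e1 * e1))) := by
  have h112 := fE112 hd hef h2f hw1 hw1'
  have h112' : ∀ x : U, gE112 r s e1 e2 * (f2 * x)
      = f2 * (gE112 r s e1 e2 * x)
        + (r ^ 3 - r * s ^ 2) • (w * (e1 * (e1 * x))) := fun x => by
    rw [← mul_assoc, h112, add_mul, mul_assoc, smul_mul_assoc, mul_assoc, mul_assoc]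
  have hef' : ∀ x : U, e1 * (f2 * x) = f2 * (e1 * x) := fun x => by
    rw [← mul_assoc, hef, mul_assoc]
  have hww : ∀ x : U, e1 * (w * x) = (r ^ 3) • (w * (e1 * x)) := fun x => by
    rw [← mul_assoc, hw1, smul_mul_assoc, mul_assoc]
  simp only [gE1112, sub_mul, mul_sub, smul_mul_assoc, mul_smul_comm, mul_assoc,
    h112, h112', hef, hef', hw1, hww, smul_sub, smul_add, smul_smul, mul_add, mul_sub]
  match_scalars <;> ring

lemma gserre
    (hS : e1 ^ 4 * e2 - ((r + s) * (r ^ 2 + s ^ 2)) • (e1 ^ 3 * e2 * e1)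
      + (r * s * (r ^ 2 + s ^ 2) * (r ^ 2 + r * s + s ^ 2)) • (e1 ^ 2 * e2 * e1 ^ 2)
      - ((r * s) ^ 3 * (r + s) * (r ^ 2 + s ^ 2)) • (e1 * e2 * e1 ^ 3)
      + ((r * s) ^ 6) • (e2 * e1 ^ 4) = 0) :
    e1 * gE1112 r s e1 e2 = (r ^ 3) • (gE1112 r s e1 e2 * e1) := by
  have key : e1 * gE1112 r s e1 e2 - (r ^ 3) • (gE1112 r s e1 e2 * e1)
      = e1 ^ 4 * e2 - ((r + s) * (r ^ 2 + s ^ 2)) • (e1 ^ 3 * e2 * e1)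
      + (r * s * (r ^ 2 + s ^ 2) * (r ^ 2 + r * s + s ^ 2)) • (e1 ^ 2 * e2 * e1 ^ 2)
      - ((r * s) ^ 3 * (r + s) * (r ^ 2 + s ^ 2)) • (e1 * e2 * e1 ^ 3)
      + ((r * s) ^ 6) • (e2 * e1 ^ 4) := by
    simp only [gE1112, gE112, gE12, pow_succ, pow_zero, one_mul,
      sub_mul, mul_sub, smul_mul_assoc, mul_smul_comm, smul_sub, smul_smul, mul_assoc]
    match_scalars <;> ring
  have : e1 * gE1112 r s e1 e2 - (r ^ 3) • (gE1112 r s e1 e2 * e1) = 0 := key.trans hS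
  rw [sub_eq_zero] at this
  exact this

lemma ge1E112 : e1 * gE112 r s e1 e2
    = gE1112 r s e1 e2 + (r ^ 2 * s) • (gE112 r s e1 e2 * e1) := by
  rw [gE1112, sub_add_cancel]

theorem gmain (hr : r ≠ 0) (hs : s ≠ 0) (hd : r ^ 3 - s ^ 3 ≠ 0)
    (hef : e1 * f2 = f2 * e1)
    (h2f : e2 * f2 = f2 * e2 + (r ^ 3 - s ^ 3)⁻¹ • (w - w'))
    (hw1 : e1 * w = (r ^ 3) • (w * e1))
    (hw2 : e2 * w = ((r ^ 3)⁻¹ * s ^ 3) • (w * e2))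
    (hw1' : e1 * w' = (s ^ 3) • (w' * e1))
    (hS : e1 ^ 4 * e2 - ((r + s) * (r ^ 2 + s ^ 2)) • (e1 ^ 3 * e2 * e1)
      + (r * s * (r ^ 2 + s ^ 2) * (r ^ 2 + r * s + s ^ 2)) • (e1 ^ 2 * e2 * e1 ^ 2)
      - ((r * s) ^ 3 * (r + s) * (r ^ 2 + s ^ 2)) • (e1 * e2 * e1 ^ 3)
      + ((r * s) ^ 6) • (e2 * e1 ^ 4) = 0) :
    (gE1112 r s e1 e2 * gE112 r s e1 e2 - (r ^ 3) • (gE112 r s e1 e2 * gE1112 r s e1 e2)) * f2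
      - f2 * (gE1112 r s e1 e2 * gE112 r s e1 e2
        - (r ^ 3) • (gE112 r s e1 e2 * gE1112 r s e1 e2)) = 0 := by
  have hf2 := fE112 hd hef h2f hw1 hw1'
  have hf3 := fE1112 hd hef h2f hw1 hw1'
  have hf2' : ∀ x : U, gE112 r s e1 e2 * (f2 * x)
      = f2 * (gE112 r s e1 e2 * x) + (r ^ 3 - r * s ^ 2) • (w * (e1 * (e1 * x))) := fun x => by
    rw [← mul_assoc, hf2, add_mul, mul_assoc, smul_mul_assoc, mul_assoc, mul_assoc]
  have hf3' : ∀ x : U, gE1112 r s e1 e2 * (f2 * x)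
      = f2 * (gE1112 r s e1 e2 * x)
        + ((r ^ 3 - r * s ^ 2) * (r ^ 3 - r ^ 2 * s)) • (w * (e1 * (e1 * (e1 * x)))) := fun x => by
    rw [← mul_assoc, hf3, add_mul, mul_assoc, smul_mul_assoc, mul_assoc, mul_assoc, mul_assoc]
  have hw112 := wE112 hr hs hw1 hw2
  have hw1112 := wE1112 hr hs hw1 hw2
  have hw112' : ∀ x : U, gE112 r s e1 e2 * (w * x)
      = (r ^ 3 * s ^ 3) • (w * (gE112 r s e1 e2 * x)) := fun x => by
    rw [← mul_assoc, hw112, smul_mul_assoc, mul_assoc]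
  have hw1112' : ∀ x : U, gE1112 r s e1 e2 * (w * x)
      = (r ^ 6 * s ^ 3) • (w * (gE1112 r s e1 e2 * x)) := fun x => by
    rw [← mul_assoc, hw1112, smul_mul_assoc, mul_assoc]
  have hser := gserre hS
  have hser' : ∀ x : U, e1 * (gE1112 r s e1 e2 * x)
      = (r ^ 3) • (gE1112 r s e1 e2 * (e1 * x)) := fun x => by
    rw [← mul_assoc, hser, smul_mul_assoc, mul_assoc]
  have h112 : e1 * gE112 r s e1 e2
      = gE1112 r s e1 e2 + (r ^ 2 * s) • (gE112 r s e1 e2 * e1) := ge1E112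
  have h112' : ∀ x : U, e1 * (gE112 r s e1 e2 * x)
      = gE1112 r s e1 e2 * x + (r ^ 2 * s) • (gE112 r s e1 e2 * (e1 * x)) := fun x => by
    rw [← mul_assoc, h112, add_mul, smul_mul_assoc, mul_assoc]
  simp only [sub_mul, mul_sub, smul_mul_assoc, mul_smul_comm, mul_assoc,
    hf2, hf3, hf2', hf3', hw112, hw1112, hw112', hw1112', hser, hser', h112, h112',
    smul_sub, smul_add, smul_smul, mul_add, mul_sub, add_mul]
  match_scalars <;> ring

end Gen

section Aux

open MvPolynomial in
lemma hr : r ≠ 0 := by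
  rw [r, map_ne_zero_iff _ (IsFractionRing.injective (MvPolynomial (Fin 2) ℚ) K)]
  exact MvPolynomial.X_ne_zero 0

open MvPolynomial in
lemma hs : s ≠ 0 := by
  rw [s, map_ne_zero_iff _ (IsFractionRing.injective (MvPolynomial (Fin 2) ℚ) K)]
  exact MvPolynomial.X_ne_zero 1

open MvPolynomial in
lemma hd : r ^ 3 - s ^ 3 ≠ 0 := by
  rw [r, s, ← map_pow, ← map_pow, ← map_sub,
    map_ne_zero_iff _ (IsFractionRing.injective (MvPolynomial (Fin 2) ℚ) K)]
  intro h
  have := congrArg (MvPolynomial.eval (fun i => if i = 0 then (2:ℚ) else 1)) h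
  norm_num at this

variable {U : Type*} [Ring U] [Algebra K U]

lemma conj_helper (w : Uˣ) (x : U) (c : K)
    (h : (w : U) * x * ((w⁻¹ : Uˣ) : U) = c • x) : (w : U) * x = c • (x * (w : U)) := by
  calc (w : U) * x = ((w : U) * x * ((w⁻¹ : Uˣ) : U)) * (w : U) := by
        rw [mul_assoc ((w : U) * x), Units.inv_mul, mul_one]
    _ = (c • x) * (w : U) := by rw [h]
    _ = c • (x * (w : U)) := smul_mul_assoc c x (w : U)

variable (d : G2 U)

lemma A1 : d.e1 * (d.ω2 : U) = (r ^ 3) • ((d.ω2 : U) * d.e1) := by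
  have h := conj_helper d.ω2 d.e1 _ d.G2_e
  rw [h, smul_smul, mul_inv_cancel₀ (pow_ne_zero 3 hr), one_smul]

lemma A2 : d.e2 * (d.ω2 : U) = ((r ^ 3)⁻¹ * s ^ 3) • ((d.ω2 : U) * d.e2) := by
  have h := conj_helper d.ω2 d.e2 _ d.G2_g
  rw [h, smul_smul, show ((r^3)⁻¹ * s^3 : K) * (r^3 * (s^3)⁻¹) = 1 by
    field_simp [hr, hs], one_smul]

lemma A3 : d.e1 * (d.ω2' : U) = (s ^ 3) • ((d.ω2' : U) * d.e1) := by
  have h := conj_helper d.ω2' d.e1 _ d.G3_e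
  rw [h, smul_smul, mul_inv_cancel₀ (pow_ne_zero 3 hs), one_smul]

end Aux

/-- In `U` the identity `[E₁₁₁₂E₁₁₂ - r³E₁₁₂E₁₁₁₂, f₂] = 0` holds. -/
theorem stmt8 {U : Type*} [Ring U] [Algebra K U] (d : G2 U) :
    (d.E1112 * d.E112 - (r ^ 3) • (d.E112 * d.E1112)) * d.f2
      - d.f2 * (d.E1112 * d.E112 - (r ^ 3) • (d.E112 * d.E1112)) = 0 := by
  have h112 : d.E112 = gE112 r s d.e1 d.e2 := rfl
  have h1112 : d.E1112 = gE1112 r s d.e1 d.e2 := rfl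
  rw [h112, h1112]
  exact gmain hr hs hd d.G4_c (sub_eq_iff_eq_add'.mp d.G4_b) (A1 d) (A2 d) (A3 d) d.G5_b
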